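/- arXiv:2601.18013 — 4 statements merged into one kernel-verified Lean document; each statement's English description precedes it below -/
import Mathlib

section
/- If e(X) = P(W=1|X) is the propensity score, then treatment assignment W is conditionally independent of covariates X given e(X); that is, P(W=1 | X, e(X)) = P(W=1 | e(X)). -/
open MeasureTheory ProbabilityTheory

/-- **Balancing score property of the propensity score.**
If `e = E[W | σ(X)]` (the propensity score, a version of `P(W=1|X)` for binary `W`),
then `P(W=1 | X, e(X)) = P(W=1 | e(X))`, i.e. the conditional expectation of `W`
given `σ(X)` (which equals `σ(X, e(X))` since `e(X)` is a function of `X`)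
coincides a.e. with the conditional expectation of `W` given `σ(e(X))`. -/
theorem propensity_balancing_score
    {Ω E : Type*} [m0 : MeasurableSpace Ω] [MeasurableSpace E]
    (μ : Measure Ω) [IsProbabilityMeasure μ]
    (W : Ω → ℝ) (hWbin : ∀ ω, W ω = 0 ∨ W ω = 1) (hWmeas : Measurable W)
    (X : Ω → E) (hX : Measurable X)
    (e : Ω → ℝ)
    (he : e = μ[W | MeasurableSpace.comap X inferInstance]) :
    μ[W | MeasurableSpace.comap X inferInstance]
      =ᵐ[μ] μ[W | MeasurableSpace.comap e inferInstance] := by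
  have hmX : MeasurableSpace.comap X inferInstance ≤ m0 := hX.comap_le
  have heMeas : Measurable[MeasurableSpace.comap X inferInstance] e := by
    rw [he]; exact stronglyMeasurable_condExp.measurable
  have hle : MeasurableSpace.comap e inferInstance
      ≤ MeasurableSpace.comap X inferInstance := heMeas.comap_le
  have hme : MeasurableSpace.comap e inferInstance ≤ m0 := hle.trans hmX
  have heSM : StronglyMeasurable[MeasurableSpace.comap e inferInstance] e :=
    (measurable_iff_comap_le.mpr le_rfl).stronglyMeasurable
  have heInt : Integrable e μ := by rw [he]; exact integrable_condExp
  have h1 : μ[e | MeasurableSpace.comap e inferInstance] = e :=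
    condExp_of_stronglyMeasurable hme heSM heInt
  calc μ[W | MeasurableSpace.comap X inferInstance] = e := he.symm
    _ = μ[e | MeasurableSpace.comap e inferInstance] := h1.symm
    _ = μ[μ[W | MeasurableSpace.comap X inferInstance]
          | MeasurableSpace.comap e inferInstance] := by rw [he]
    _ =ᵐ[μ] μ[W | MeasurableSpace.comap e inferInstance] :=
        condExp_condExp_of_le hle hmX
end

section
/- Strong ignorability propagates to the propensity score: if the potential outcomes (Y(1), Y(0)) are jointly conditionally independent of W given X, then (Y(1), Y(0)) are jointly conditionally independent of W given the propensity score e(X). -/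
open MeasureTheory ProbabilityTheory

/-- **Strong ignorability propagates to the propensity score.**
If `P(W=1 | Y(1), Y(0), X) = P(W=1 | X)` a.s. (i.e. `(Y1,Y0) ⊥ W | X`),
where `e = E[W | σ(X)]` is the propensity score, then
`P(W=1 | Y(1), Y(0), e(X)) = P(W=1 | e(X))` a.s. -/
theorem strong_ignorability_propensity
    {Ω E : Type*} [m0 : MeasurableSpace Ω] [MeasurableSpace E]
    (μ : Measure Ω) [IsProbabilityMeasure μ]
    (W : Ω → ℝ) (hWbin : ∀ ω, W ω = 0 ∨ W ω = 1) (hWmeas : Measurable W)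
    (X : Ω → E) (hX : Measurable X)
    (Y1 Y0 : Ω → ℝ) (hY1 : Measurable Y1) (hY0 : Measurable Y0)
    (e : Ω → ℝ)
    (he : e = μ[W | MeasurableSpace.comap X inferInstance])
    (hignorable :
      μ[W | MeasurableSpace.comap (fun ω => (Y1 ω, Y0 ω, X ω)) inferInstance]
        =ᵐ[μ] μ[W | MeasurableSpace.comap X inferInstance]) :
    μ[W | MeasurableSpace.comap (fun ω => (Y1 ω, Y0 ω, e ω)) inferInstance]
      =ᵐ[μ] μ[W | MeasurableSpace.comap e inferInstance] := by
  set mX := MeasurableSpace.comap X inferInstance with hmXdef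
  set mYX := MeasurableSpace.comap (fun ω => (Y1 ω, Y0 ω, X ω)) inferInstance with hmYXdef
  set me := MeasurableSpace.comap e inferInstance with hmedef
  set mYe := MeasurableSpace.comap (fun ω => (Y1 ω, Y0 ω, e ω)) inferInstance with hmYedef
  have hmeasYX : Measurable[m0] (fun ω => (Y1 ω, Y0 ω, X ω)) :=
    hY1.prodMk (hY0.prodMk hX)
  have hYX_le : mYX ≤ m0 := measurable_iff_comap_le.1 hmeasYX
  have hX_le : mX ≤ m0 := measurable_iff_comap_le.1 hX
  have hSMe : StronglyMeasurable[mX] e := he ▸ stronglyMeasurable_condExp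
  have he_mX : Measurable[mX] e := hSMe.measurable
  have hcanYX : Measurable[mYX] (fun ω => (Y1 ω, Y0 ω, X ω)) :=
    measurable_iff_comap_le.2 le_rfl
  have hmX_le_mYX : mX ≤ mYX := measurable_iff_comap_le.1 hcanYX.snd.snd
  have he_mYX : Measurable[mYX] e := he_mX.mono hmX_le_mYX le_rfl
  have hmYe_meas : Measurable[mYX] (fun ω => (Y1 ω, Y0 ω, e ω)) :=
    hcanYX.fst.prodMk (hcanYX.snd.fst.prodMk he_mYX)
  have hmYe_le_mYX : mYe ≤ mYX := measurable_iff_comap_le.1 hmYe_meas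
  have hYe_le : mYe ≤ m0 := hmYe_le_mYX.trans hYX_le
  have hcanYe : Measurable[mYe] (fun ω => (Y1 ω, Y0 ω, e ω)) :=
    measurable_iff_comap_le.2 le_rfl
  have he_mYe : Measurable[mYe] e := hcanYe.snd.snd
  have hme_le_mYe : me ≤ mYe := measurable_iff_comap_le.1 he_mYe
  have hme_le_mX : me ≤ mX := measurable_iff_comap_le.1 he_mX
  have hInt_e : Integrable e μ := he ▸ integrable_condExp
  have hWe : μ[W|mX] =ᵐ[μ] e := by rw [he]
  have h1 : μ[W|mYe] =ᵐ[μ] e := by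
    calc μ[W|mYe] =ᵐ[μ] μ[μ[W|mYX]|mYe] :=
          (condExp_condExp_of_le hmYe_le_mYX hYX_le).symm
      _ =ᵐ[μ] μ[e|mYe] := condExp_congr_ae (hignorable.trans hWe)
      _ = e := condExp_of_stronglyMeasurable hYe_le he_mYe.stronglyMeasurable hInt_e
  have h2 : μ[W|me] =ᵐ[μ] e := by
    calc μ[W|me] =ᵐ[μ] μ[μ[W|mX]|me] :=
          (condExp_condExp_of_le hme_le_mX hX_le).symm
      _ =ᵐ[μ] μ[e|me] := condExp_congr_ae hWe
      _ = e := condExp_of_stronglyMeasurable (hme_le_mX.trans hX_le)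
          (measurable_iff_comap_le.2 le_rfl).stronglyMeasurable hInt_e
  exact h1.trans h2.symm
end

section
/- Under consistency (Y = W·Y(1) + (1−W)·Y(0)), strong ignorability given the propensity score, and positivity, the average treatment effect on the treated satisfies E[Y(1) − Y(0) | W=1] = E_{e(X)|W=1}[ E[Y | W=1, e(X)] − E[Y | W=0, e(X)] ]; i.e., within strata of equal propensity score, the mean difference of observed outcomes between treated and untreated identifies the conditional treatment effect. -/
/-!
Given the propensity score `e`, treatment is conditionally independent of `Y₀`, so by Bayes'
formula the regression of `Y₀` on `e` is the same among the treated, among the untreated and in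
the whole population. Among the untreated `Y = Y₀`; positivity (`e < 1`) transfers this
identity of regressions, a priori known only on `{W = 0}`, to the treated population, where it
integrates to `E[Y₀ | W = 1]`. The treated regression of `Y = Y₁` integrates to `E[Y₁ | W = 1]`.
-/

open MeasureTheory ProbabilityTheory Filter Set

namespace ProbabilityTheory

variable {Ω : Type*} {m 𝒢 ℋ : MeasurableSpace Ω} [mΩ : MeasurableSpace Ω] {μ : Measure Ω}
  {S : Set Ω}

lemma _root_.MeasureTheory.Integrable.cond {f : Ω → ℝ} (hf : Integrable f μ) (S : Set Ω) :
    Integrable f μ[|S] := by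
  by_cases hS : μ S = 0
  · rw [cond_eq_zero_of_meas_eq_zero hS]
    exact integrable_zero_measure
  · exact hf.restrict.smul_measure (ENNReal.inv_ne_top.2 hS)

omit mΩ in
lemma mul_indicator_one (f : Ω → ℝ) (S : Set Ω) : f * S.indicator 1 = S.indicator f := by
  ext x
  by_cases hx : x ∈ S <;> simp [hx]

lemma setIntegral_cond (hS : MeasurableSet S) {A : Set Ω} (hA : MeasurableSet A) (f : Ω → ℝ) :
    ∫ x in A, f x ∂μ[|S] = (μ.real S)⁻¹ * ∫ x in A, f x * S.indicator 1 x ∂μ := by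
  rw [← Pi.mul_def, mul_indicator_one, ProbabilityTheory.cond, Measure.restrict_smul,
    integral_smul_measure, Measure.restrict_restrict hA, setIntegral_indicator hS,
    ENNReal.toReal_inv, smul_eq_mul, measureReal_def]

variable [IsFiniteMeasure μ]

lemma integrable_indicator_one (hS : MeasurableSet S) : Integrable (S.indicator (1 : Ω → ℝ)) μ :=
  (integrable_const (1 : ℝ)).indicator hS

/-- Bayes' formula `(μ[|S])[f | m] = μ[f 1_S | m] / μ[1_S | m]`, stated without division. -/
lemma condExp_cond_ae_eq (hm : m ≤ mΩ) (hS : MeasurableSet S) {f g : Ω → ℝ}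
    (hf : Integrable f μ) (hg : StronglyMeasurable[m] g) (hgi : Integrable g μ)
    (h : μ[f * S.indicator 1 | m] =ᵐ[μ] g * μ[S.indicator 1 | m]) :
    g =ᵐ[μ[|S]] (μ[|S])[f | m] := by
  refine ae_eq_condExp_of_forall_setIntegral_eq hm (hf.cond S)
    (fun _ _ _ => (hgi.cond S).integrableOn) (fun A hA _ => ?_) hg.aestronglyMeasurable
  rw [setIntegral_cond hS (hm A hA), setIntegral_cond hS (hm A hA)]
  congr 1
  have hgS : Integrable (g * S.indicator 1) μ := by
    rw [mul_indicator_one]; exact hgi.indicator hS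
  have hfS : Integrable (f * S.indicator 1) μ := by
    rw [mul_indicator_one]; exact hf.indicator hS
  calc ∫ x in A, g x * S.indicator 1 x ∂μ = ∫ x in A, μ[g * S.indicator 1 | m] x ∂μ :=
        (setIntegral_condExp hm hgS hA).symm
    _ = ∫ x in A, μ[f * S.indicator 1 | m] x ∂μ := by
        refine setIntegral_congr_ae (hm A hA) ?_
        filter_upwards [condExp_mul_of_stronglyMeasurable_left hg hgS
          (integrable_indicator_one hS), h] with x hx hx' _
        rw [hx, hx']
    _ = ∫ x in A, f x * S.indicator 1 x ∂μ := setIntegral_condExp hm hfS hA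

lemma measure_eq_zero_of_condExp_indicator_pos (hm : m ≤ mΩ) (hS : MeasurableSet S)
    (hpos : ∀ᵐ x ∂μ, 0 < μ[S.indicator (1 : Ω → ℝ) | m] x) {D : Set Ω} (hD : MeasurableSet[m] D)
    (hDS : μ (D ∩ S) = 0) : μ D = 0 := by
  have hint : ∫ x in D, μ[S.indicator (1 : Ω → ℝ) | m] x ∂μ = 0 := by
    rw [setIntegral_condExp hm (integrable_indicator_one hS) hD, integral_indicator_one hS,
      measureReal_restrict_apply hS, inter_comm, measureReal_def, hDS, ENNReal.toReal_zero]
  have hzero : μ[S.indicator (1 : Ω → ℝ) | m] =ᵐ[μ.restrict D] 0 :=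
    (setIntegral_eq_zero_iff_of_nonneg_ae (ae_restrict_of_ae (hpos.mono fun _ h => h.le))
      integrable_condExp.integrableOn).mp hint
  have hfalse : ∀ᵐ x ∂μ.restrict D, False := by
    filter_upwards [hzero, ae_restrict_of_ae hpos] with x h0 hx
    exact (h0 ▸ hx).false
  rwa [eventually_false_iff_eq_bot, ae_eq_bot, Measure.restrict_eq_zero] at hfalse

lemma ae_eq_of_ae_eq_cond (hm : m ≤ mΩ) (hS : MeasurableSet S)
    (hpos : ∀ᵐ x ∂μ, 0 < μ[S.indicator (1 : Ω → ℝ) | m] x) {f g : Ω → ℝ}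
    (hf : StronglyMeasurable[m] f) (hg : StronglyMeasurable[m] g) (h : f =ᵐ[μ[|S]] g) :
    f =ᵐ[μ] g := by
  have hD : MeasurableSet[m] {x | f x ≠ g x} :=
    (measurableSet_eq_fun hf.measurable hg.measurable).compl
  refine ae_iff.2 (measure_eq_zero_of_condExp_indicator_pos hm hS hpos hD ?_)
  have hcond : (μ S)⁻¹ * μ (S ∩ {x | f x ≠ g x}) = 0 := by
    rw [← cond_apply hS]; exact ae_iff.1 h
  rw [inter_comm]
  exact (mul_eq_zero.1 hcond).resolve_left (ENNReal.inv_ne_zero.2 (measure_ne_top μ S))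

lemma condExp_mul_ae_eq_of_condExp_eq (h𝒢ℋ : 𝒢 ≤ ℋ) (hℋ : ℋ ≤ mΩ) {Z V : Ω → ℝ}
    (hZ : StronglyMeasurable[ℋ] Z) (hZi : Integrable Z μ) (hV : Integrable V μ)
    (hZV : Integrable (Z * V) μ) (hind : μ[V | ℋ] =ᵐ[μ] μ[V | 𝒢]) :
    μ[Z * V | 𝒢] =ᵐ[μ] μ[Z | 𝒢] * μ[V | 𝒢] := by
  have hpull : μ[Z * V | ℋ] =ᵐ[μ] Z * μ[V | 𝒢] :=
    (condExp_mul_of_stronglyMeasurable_left hZ hZV hV).trans ((EventuallyEq.refl _ Z).mul hind)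
  calc μ[Z * V | 𝒢] =ᵐ[μ] μ[μ[Z * V | ℋ] | 𝒢] := (condExp_condExp_of_le h𝒢ℋ hℋ).symm
    _ =ᵐ[μ] μ[Z * μ[V | 𝒢] | 𝒢] := condExp_congr_ae hpull
    _ =ᵐ[μ] μ[Z | 𝒢] * μ[V | 𝒢] :=
      condExp_mul_of_stronglyMeasurable_right stronglyMeasurable_condExp
        (integrable_condExp.congr hpull) hZi

lemma condExp_ae_eq_condExp_cond (h𝒢ℋ : 𝒢 ≤ ℋ) (hℋ : ℋ ≤ mΩ) (hS : MeasurableSet S)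
    (hind : μ[S.indicator 1 | ℋ] =ᵐ[μ] μ[S.indicator (1 : Ω → ℝ) | 𝒢]) {Z : Ω → ℝ}
    (hZ : StronglyMeasurable[ℋ] Z) (hZi : Integrable Z μ) :
    μ[Z | 𝒢] =ᵐ[μ[|S]] (μ[|S])[Z | 𝒢] := by
  have hZS : Integrable (Z * S.indicator 1) μ := by
    rw [mul_indicator_one]; exact hZi.indicator hS
  exact condExp_cond_ae_eq (h𝒢ℋ.trans hℋ) hS hZi stronglyMeasurable_condExp integrable_condExp
    (condExp_mul_ae_eq_of_condExp_eq h𝒢ℋ hℋ hZ hZi (integrable_indicator_one hS) hZS hind)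

lemma condExp_comap_ae_eq_of_ae_eq_condExp (hm : m ≤ mΩ) {W e : Ω → ℝ} (hW : Integrable W μ)
    (he : Measurable e) (hWe : e =ᵐ[μ] μ[W | m]) :
    μ[W | MeasurableSpace.comap e inferInstance] =ᵐ[μ] e := by
  refine (ae_eq_condExp_of_forall_setIntegral_eq he.comap_le hW
    (fun _ _ _ => (integrable_condExp.congr hWe.symm).integrableOn) (fun s hs _ => ?_)
    (comap_measurable e).stronglyMeasurable.aestronglyMeasurable).symm
  obtain ⟨B, hB, rfl⟩ := hs
  have hpre : (e ⁻¹' B : Set Ω) =ᵐ[μ] (μ[W | m] ⁻¹' B : Set Ω) :=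
    hWe.fun_comp (· ∈ B)
  have hBm : MeasurableSet[m] (μ[W | m] ⁻¹' B) := stronglyMeasurable_condExp.measurable hB
  calc ∫ x in e ⁻¹' B, e x ∂μ = ∫ x in μ[W | m] ⁻¹' B, μ[W | m] x ∂μ := by
        rw [setIntegral_congr_set hpre]
        exact setIntegral_congr_ae (hm _ hBm) (hWe.mono fun _ h _ => h)
    _ = ∫ x in μ[W | m] ⁻¹' B, W x ∂μ := setIntegral_condExp hm hW hBm
    _ = ∫ x in e ⁻¹' B, W x ∂μ := setIntegral_congr_set hpre.symm

lemma condExp_indicator_compl_ae_eq (hm : m ≤ mΩ) (hS : MeasurableSet S) :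
    μ[Sᶜ.indicator 1 | m] =ᵐ[μ] 1 - μ[S.indicator (1 : Ω → ℝ) | m] := by
  rw [indicator_compl]
  filter_upwards [condExp_sub (integrable_const (1 : ℝ)) (integrable_indicator_one hS) m]
    with ω h
  exact h.trans (by rw [condExp_const hm]; rfl)

lemma integral_cond_sub_eq_integral_condExp_cond_sub (h𝒢ℋ : 𝒢 ≤ ℋ) (hℋ : ℋ ≤ mΩ) {T : Set Ω}
    (hT : MeasurableSet T) (hind : μ[T.indicator 1 | ℋ] =ᵐ[μ] μ[T.indicator (1 : Ω → ℝ) | 𝒢])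
    (hpos : ∀ᵐ ω ∂μ, μ[T.indicator (1 : Ω → ℝ) | 𝒢] ω < 1) {Y Y1 Y0 : Ω → ℝ}
    (hY1 : Integrable Y1 μ) (hY0 : StronglyMeasurable[ℋ] Y0) (hY0i : Integrable Y0 μ)
    (hYT : ∀ ω ∈ T, Y ω = Y1 ω) (hYTc : ∀ ω ∈ Tᶜ, Y ω = Y0 ω) :
    ∫ ω, (Y1 ω - Y0 ω) ∂μ[|T]
      = ∫ ω, ((μ[|T])[Y | 𝒢] ω - (μ[|Tᶜ])[Y | 𝒢] ω) ∂μ[|T] := by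
  have h𝒢 : 𝒢 ≤ mΩ := h𝒢ℋ.trans hℋ
  have hindc : μ[Tᶜ.indicator 1 | ℋ] =ᵐ[μ] μ[Tᶜ.indicator (1 : Ω → ℝ) | 𝒢] := by
    filter_upwards [condExp_indicator_compl_ae_eq hℋ hT, condExp_indicator_compl_ae_eq h𝒢 hT,
      hind] with ω hℋω h𝒢ω hω
    rw [hℋω, h𝒢ω, Pi.sub_apply, Pi.sub_apply, hω]
  have hposc : ∀ᵐ ω ∂μ, 0 < μ[Tᶜ.indicator (1 : Ω → ℝ) | 𝒢] ω := by
    filter_upwards [condExp_indicator_compl_ae_eq h𝒢 hT, hpos] with ω h hω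
    rw [h, Pi.sub_apply, Pi.one_apply, sub_pos]
    exact hω
  have hY0T := condExp_ae_eq_condExp_cond h𝒢ℋ hℋ hT hind hY0 hY0i
  have hY0Tc := condExp_ae_eq_condExp_cond h𝒢ℋ hℋ hT.compl hindc hY0 hY0i
  have hcontrol : (μ[|Tᶜ])[Y | 𝒢] =ᵐ[μ[|T]] μ[Y0 | 𝒢] :=
    cond_absolutelyContinuous.ae_eq <| ae_eq_of_ae_eq_cond h𝒢 hT.compl hposc
      stronglyMeasurable_condExp stronglyMeasurable_condExp
      ((condExp_congr_ae (ae_cond_of_forall_mem hT.compl hYTc)).trans hY0Tc.symm)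
  rw [integral_sub (hY1.cond T) (hY0i.cond T),
    integral_sub integrable_condExp ((integrable_condExp.cond T).congr hcontrol.symm),
    integral_congr_ae hcontrol, integral_congr_ae hY0T, integral_condExp h𝒢, integral_condExp h𝒢,
    integral_congr_ae (ae_cond_of_forall_mem hT hYT)]

end ProbabilityTheory

/-- **Identification of the ATT by stratification on the propensity score.**
Under consistency `Y = W·Y(1) + (1−W)·Y(0)`, strong ignorability given the
propensity score `e(X)`, and positivity `0 < e(X) < 1` a.s., the average treatment
effect on the treated `E[Y(1) − Y(0) | W=1]` equals the average, over the
distribution of `e(X)` among the treated, of the difference of within-stratum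
conditional means `E[Y | W=1, e(X)] − E[Y | W=0, e(X)]` of the observed outcome. -/
theorem att_identification_propensity_strata
    {Ω E : Type*} [m0 : MeasurableSpace Ω] [MeasurableSpace E]
    (μ : Measure Ω) [IsProbabilityMeasure μ]
    (W : Ω → ℝ) (hWbin : ∀ ω, W ω = 0 ∨ W ω = 1) (hWmeas : Measurable W)
    (X : Ω → E) (hX : Measurable X)
    (Y1 Y0 Y : Ω → ℝ) (hY1 : Measurable Y1) (hY0 : Measurable Y0)
    (hY1int : Integrable Y1 μ) (hY0int : Integrable Y0 μ)
    -- consistency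
    (hconsist : ∀ ω, Y ω = W ω * Y1 ω + (1 - W ω) * Y0 ω)
    -- the propensity score
    (e : Ω → ℝ) (hemeas : Measurable e)
    (he : e =ᵐ[μ] μ[W | MeasurableSpace.comap X inferInstance])
    -- positivity
    (hpos : ∀ᵐ ω ∂μ, 0 < e ω ∧ e ω < 1)
    -- strong ignorability given the propensity score
    (hignorable :
      μ[W | MeasurableSpace.comap (fun ω => (Y1 ω, Y0 ω, e ω)) inferInstance]
        =ᵐ[μ] μ[W | MeasurableSpace.comap e inferInstance]) :
    -- ATT = E_{e(X)|W=1}[ E[Y|W=1,e(X)] − E[Y|W=0,e(X)] ]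
    ∫ ω, (Y1 ω - Y0 ω) ∂(ProbabilityTheory.cond μ {ω | W ω = 1})
      = ∫ ω,
          (MeasureTheory.condExp (MeasurableSpace.comap e inferInstance)
              (ProbabilityTheory.cond μ {ω | W ω = 1}) Y ω
            - MeasureTheory.condExp (MeasurableSpace.comap e inferInstance)
              (ProbabilityTheory.cond μ {ω | W ω = 0}) Y ω)
          ∂(ProbabilityTheory.cond μ {ω | W ω = 1}) := by
  have hℋ := (hY1.prodMk (hY0.prodMk hemeas)).comap_le
  have h𝒢ℋ : MeasurableSpace.comap e inferInstance
      ≤ MeasurableSpace.comap (fun ω => (Y1 ω, Y0 ω, e ω)) inferInstance :=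
    (comap_measurable fun ω => (Y1 ω, Y0 ω, e ω)).snd.snd.comap_le
  have hT : MeasurableSet {ω | W ω = 1} := hWmeas (measurableSet_singleton 1)
  have hTW : {ω | W ω = 1}.indicator 1 = W := by
    ext ω; rcases hWbin ω with h | h <;> simp [h]
  have hTc : {ω | W ω = 1}ᶜ = {ω | W ω = 0} := by
    ext ω; rcases hWbin ω with h | h <;> simp [h]
  have hWe : μ[W | MeasurableSpace.comap e inferInstance] =ᵐ[μ] e :=
    condExp_comap_ae_eq_of_ae_eq_condExp hX.comap_le (hTW ▸ integrable_indicator_one hT)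
      hemeas he
  rw [← hTc]
  refine integral_cond_sub_eq_integral_condExp_cond_sub h𝒢ℋ hℋ hT
    (by rw [hTW]; exact hignorable) ?_ hY1int
    (comap_measurable fun ω => (Y1 ω, Y0 ω, e ω)).snd.fst.stronglyMeasurable hY0int
    (fun ω hω => by simp [hconsist ω, show W ω = 1 from hω])
    (fun ω hω => by simp [hconsist ω, (hWbin ω).resolve_right hω])
  filter_upwards [hWe, hpos] with ω h hω
  rw [hTW, h]
  exact hω.2
end

section
/- In a population where W is independent of the random vector X̃ (balance holds exactly) with 0 < δ := P(W=1) < 1, the population least-squares coefficient on W in the linear regression of Y on (1, X̃, W) equals E[Y | W=1] − E[Y | W=0], regardless of the true functional form of E[Y | W, X̃]. -/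
/-!
Write the fitted value as `Z + γ₁ W` with `Z = γ₀ + ∑ γ₂ⱼ X̃ⱼ`, a function of `X̃` and hence
independent of `W`. Since `W` is the indicator of `{W = 1}`, the normal equations for `1` and `W`
read `E[Y] = E[Z] + γ₁ δ` and `E[Y; W = 1] = E[Z; W = 1] + γ₁ δ = δ (E[Z] + γ₁)`, so
`E[Y | W = 1] = E[Z] + γ₁` and `E[Y | W = 0] = E[Z]`.
-/

open MeasureTheory ProbabilityTheory

section ZeroOneValued

variable {Ω : Type*} {W : Ω → ℝ}

lemma mul_eq_indicator_of_zero_or_one (hW : ∀ ω, W ω = 0 ∨ W ω = 1) (f : Ω → ℝ) :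
    (fun ω => f ω * W ω) = {ω | W ω = 1}.indicator f := by
  funext ω
  rcases hW ω with h | h <;> simp [Set.indicator, h]

variable [MeasurableSpace Ω] {μ : Measure Ω}

lemma integral_mul_eq_setIntegral_of_zero_or_one (hW : ∀ ω, W ω = 0 ∨ W ω = 1)
    (hWm : Measurable W) (f : Ω → ℝ) :
    ∫ ω, f ω * W ω ∂μ = ∫ ω in {ω | W ω = 1}, f ω ∂μ := by
  have hA : MeasurableSet {ω | W ω = 1} := hWm (measurableSet_singleton 1)
  rw [mul_eq_indicator_of_zero_or_one hW, integral_indicator hA]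

lemma integral_eq_measureReal_of_zero_or_one (hW : ∀ ω, W ω = 0 ∨ W ω = 1)
    (hWm : Measurable W) : ∫ ω, W ω ∂μ = μ.real {ω | W ω = 1} := by
  simpa using integral_mul_eq_setIntegral_of_zero_or_one (μ := μ) hW hWm 1

lemma integrable_of_zero_or_one [IsFiniteMeasure μ] (hW : ∀ ω, W ω = 0 ∨ W ω = 1)
    (hWm : Measurable W) : Integrable W μ := by
  refine (integrable_const (1 : ℝ)).mono' hWm.aestronglyMeasurable (ae_of_all _ fun ω => ?_)
  rcases hW ω with h | h <;> simp [h]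

lemma ProbabilityTheory.IndepFun.setIntegral_eq_measureReal_mul_integral_of_zero_or_one
    {Z : Ω → ℝ} (hindep : IndepFun W Z μ) (hW : ∀ ω, W ω = 0 ∨ W ω = 1) (hWm : Measurable W)
    (hZ : AEStronglyMeasurable Z μ) :
    ∫ ω in {ω | W ω = 1}, Z ω ∂μ = μ.real {ω | W ω = 1} * ∫ ω, Z ω ∂μ := by
  rw [← integral_mul_eq_setIntegral_of_zero_or_one hW hWm, ← integral_eq_measureReal_of_zero_or_one
    hW hWm, ← hindep.integral_fun_mul_eq_mul_integral hWm.aestronglyMeasurable hZ]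
  simp only [mul_comm]

end ZeroOneValued

lemma coeff_eq_sub_of_normal_equations_of_indepFun {Ω : Type*} [MeasurableSpace Ω]
    {μ : Measure Ω} [IsFiniteMeasure μ] {W Y Z : Ω → ℝ} {c : ℝ}
    (hW : ∀ ω, W ω = 0 ∨ W ω = 1) (hWm : Measurable W) (hY : Integrable Y μ)
    (hZ : Integrable Z μ) (hindep : IndepFun W Z μ)
    (hδ0 : 0 < μ.real {ω | W ω = 1}) (hδ1 : μ.real {ω | W ω = 1} < 1)
    (h1 : ∫ ω, Y ω - (Z ω + c * W ω) ∂μ = 0)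
    (hnW : ∫ ω, (Y ω - (Z ω + c * W ω)) * W ω ∂μ = 0) :
    c = (∫ ω in {ω | W ω = 1}, Y ω ∂μ) / μ.real {ω | W ω = 1}
          - (∫ ω in {ω | W ω = 0}, Y ω ∂μ) / (1 - μ.real {ω | W ω = 1}) := by
  set A := {ω | W ω = 1}
  have hA : MeasurableSet A := hWm (measurableSet_singleton 1)
  have hWint : Integrable W μ := integrable_of_zero_or_one hW hWm
  have hfit : Integrable (fun ω => Z ω + c * W ω) μ := hZ.add (hWint.const_mul c)
  have hfitA : IntegrableOn (fun ω => Z ω + c) A μ := (hZ.add (integrable_const c)).integrableOn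
  have hEY : ∫ ω, Y ω ∂μ = ∫ ω, Z ω ∂μ + c * μ.real A := by
    rw [integral_sub hY hfit, integral_add hZ (hWint.const_mul c),
      integral_const_mul, integral_eq_measureReal_of_zero_or_one hW hWm] at h1
    linarith
  have hEYA : ∫ ω in A, Y ω ∂μ = μ.real A * ∫ ω, Z ω ∂μ + c * μ.real A := by
    rw [integral_mul_eq_setIntegral_of_zero_or_one hW hWm,
      setIntegral_congr_fun hA (g := fun ω => Y ω - (Z ω + c)) fun ω (hω : W ω = 1) => by simp [hω],
      integral_sub hY.integrableOn hfitA,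
      integral_add hZ.integrableOn (integrable_const c).integrableOn, setIntegral_const,
      hindep.setIntegral_eq_measureReal_mul_integral_of_zero_or_one hW hWm
        hZ.aestronglyMeasurable, smul_eq_mul] at hnW
    linarith
  have hEY0 : ∫ ω in {ω | W ω = 0}, Y ω ∂μ = ∫ ω, Y ω ∂μ - ∫ ω in A, Y ω ∂μ := by
    have hcompl : {ω | W ω = 0} = Aᶜ := by
      ext ω
      rcases hW ω with h | h <;> simp [A, h]
    rw [hcompl, ← integral_add_compl hA hY, add_sub_cancel_left]
  rw [hEY0, hEY, hEYA]
  field_simp [hδ0.ne', (sub_pos.2 hδ1).ne']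
  ring

theorem balanced_linear_projection_coefficient_general
    {Ω : Type*} [m0 : MeasurableSpace Ω]
    (μ : Measure Ω) [IsProbabilityMeasure μ]
    {K : ℕ}
    (W : Ω → ℝ) (hWbin : ∀ ω, W ω = 0 ∨ W ω = 1) (hWmeas : Measurable W)
    (Xt : Ω → Fin K → ℝ)
    (Y : Ω → ℝ) (hYint : MemLp Y 2 μ) (hXt2 : ∀ j, MemLp (fun ω => Xt ω j) 2 μ)
    (δ : ℝ) (hδ : δ = (μ {ω | W ω = 1}).toReal) (hδ0 : 0 < δ) (hδ1 : δ < 1)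
    -- exact balance: W independent of X̃
    (hindep : IndepFun W Xt μ)
    (γ0 γ1 : ℝ) (γ2 : Fin K → ℝ)
    -- the population normal equations for the projection of Y on (1, X̃, W)
    (resid : Ω → ℝ)
    (hresid : resid = fun ω => Y ω - (γ0 + (∑ j, γ2 j * Xt ω j) + γ1 * W ω))
    (hn1 : ∫ ω, resid ω ∂μ = 0)
    (hnW : ∫ ω, resid ω * W ω ∂μ = 0) :
    γ1 = (∫ ω in {ω | W ω = 1}, Y ω ∂μ) / δ
          - (∫ ω in {ω | W ω = 0}, Y ω ∂μ) / (1 - δ) := by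
  subst hresid
  rw [← measureReal_def] at hδ
  subst hδ
  have hZint : Integrable (fun ω => γ0 + ∑ j, γ2 j * Xt ω j) μ :=
    (integrable_const γ0).add
      (integrable_finsetSum _ fun j _ => ((hXt2 j).integrable one_le_two).const_mul (γ2 j))
  have hZindep : IndepFun W (fun ω => γ0 + ∑ j, γ2 j * Xt ω j) μ :=
    hindep.comp (φ := id) (ψ := fun x : Fin K → ℝ => γ0 + ∑ j, γ2 j * x j) measurable_id
      (by fun_prop)
  exact coeff_eq_sub_of_normal_equations_of_indepFun hWbin hWmeas (hYint.integrable one_le_two)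
    hZint hZindep hδ0 hδ1 hn1 hnW

/-- **Misspecified linear adjustment is unbiased under exact balance.**
If `W` is binary with `0 < δ = P(W=1) < 1` and independent of the regressors `X̃`
(exact balance), then any coefficients `(γ₀, γ₂, γ₁)` satisfying the population
normal equations for the linear projection of `Y` on `(1, X̃, W)` have
`γ₁ = E[Y | W=1] − E[Y | W=0]`, regardless of the true form of `E[Y | W, X̃]`. -/
theorem balanced_linear_projection_coefficient
    {Ω : Type*} [m0 : MeasurableSpace Ω]
    (μ : Measure Ω) [IsProbabilityMeasure μ]
    {K : ℕ}
    (W : Ω → ℝ) (hWbin : ∀ ω, W ω = 0 ∨ W ω = 1) (hWmeas : Measurable W)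
    (Xt : Ω → Fin K → ℝ) (hXtmeas : Measurable Xt)
    (Y : Ω → ℝ) (hYint : MemLp Y 2 μ) (hXt2 : ∀ j, MemLp (fun ω => Xt ω j) 2 μ)
    (δ : ℝ) (hδ : δ = (μ {ω | W ω = 1}).toReal) (hδ0 : 0 < δ) (hδ1 : δ < 1)
    -- exact balance: W independent of X̃
    (hindep : IndepFun W Xt μ)
    (γ0 γ1 : ℝ) (γ2 : Fin K → ℝ)
    -- the population normal equations for the projection of Y on (1, X̃, W)
    (resid : Ω → ℝ)
    (hresid : resid = fun ω => Y ω - (γ0 + (∑ j, γ2 j * Xt ω j) + γ1 * W ω))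
    (hn1 : ∫ ω, resid ω ∂μ = 0)
    (hnX : ∀ j, ∫ ω, resid ω * Xt ω j ∂μ = 0)
    (hnW : ∫ ω, resid ω * W ω ∂μ = 0) :
    γ1 = (∫ ω in {ω | W ω = 1}, Y ω ∂μ) / δ
          - (∫ ω in {ω | W ω = 0}, Y ω ∂μ) / (1 - δ) :=
  balanced_linear_projection_coefficient_general (m0 := m0) μ W hWbin hWmeas Xt Y hYint hXt2 δ hδ
    hδ0 hδ1 hindep γ0 γ1 γ2 resid hresid hn1 hnW
end
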